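/- arXiv:1403.2509 — 5 statements merged into one kernel-verified Lean document; each statement's English description precedes it below -/
import Mathlib

section
/- For even n ≥ 4, the extremal effect e_j evaluated on the extremal state ω_i satisfies ⟨e_j, ω_i⟩ = (1 + sec(π/n)·cos((2i - 2j + 1)π/n))/2, and in particular 0 ≤ ⟨e_j, ω_i⟩ ≤ 1. -/
open Real

noncomputable def rn (n : ℕ) : ℝ := Real.sqrt (1 / Real.cos (π / n))

noncomputable def ωst (n : ℕ) (i : ℤ) : Fin 3 → ℝ :=
  ![rn n * Real.cos (2 * π * (i : ℝ) / n), rn n * Real.sin (2 * π * (i : ℝ) / n), 1]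

noncomputable def eEv (n : ℕ) (j : ℤ) : Fin 3 → ℝ :=
  ![rn n * Real.cos ((2 * (j : ℝ) - 1) * π / n) / 2,
    rn n * Real.sin ((2 * (j : ℝ) - 1) * π / n) / 2, 1 / 2]

noncomputable def eOd (n : ℕ) (j : ℤ) : Fin 3 → ℝ :=
  (1 / (1 + rn n ^ 2)) •
    ![rn n * Real.cos (2 * π * (j : ℝ) / n), rn n * Real.sin (2 * π * (j : ℝ) / n), 1]

noncomputable def ip (v w : Fin 3 → ℝ) : ℝ := v 0 * w 0 + v 1 * w 1 + v 2 * w 2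

noncomputable def uE : Fin 3 → ℝ := ![0, 0, 1]

/-!
Writing `θ = (2i - 2j + 1)π/n`, the angle-subtraction formula gives
`⟨e_j, ω_i⟩ = (1 + r_n² cos θ)/2` with `r_n² = sec(π/n)`. As `n` is even and `2i - 2j + 1` odd,
`θ` is not a multiple of `π`, hence lies at distance at least `π/n` from every multiple of `π`;
this gives `|cos θ| ≤ cos(π/n)`, i.e. `|sec(π/n) cos θ| ≤ 1`.
-/

namespace Real

theorem abs_cos_le_cos_of_mem_Icc {x δ : ℝ} (hδ : 0 ≤ δ) (hx : x ∈ Set.Icc δ (π - δ)) :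
    |cos x| ≤ cos δ := by
  have hup : cos x ≤ cos δ := cos_le_cos_of_nonneg_of_le_pi hδ (by linarith [hx.2]) hx.1
  have hlo : cos (π - δ) ≤ cos x :=
    cos_le_cos_of_nonneg_of_le_pi (by linarith [hx.1]) (by linarith) hx.2
  rw [cos_pi_sub] at hlo
  exact abs_le.2 ⟨hlo, hup⟩

theorem abs_cos_int_mul_pi_div_le {n : ℕ} {k : ℤ} (hk : ¬(n : ℤ) ∣ k) :
    |cos (k * π / n)| ≤ cos (π / n) := by
  rcases Nat.eq_zero_or_pos n with rfl | hn
  · simp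
  set r := k % n
  have hr_pos : 0 < r := lt_of_le_of_ne (Int.emod_nonneg k (by omega))
    (fun h => hk (Int.dvd_of_emod_eq_zero h.symm))
  have hr_lt : r < n := Int.emod_lt_of_pos k (by omega)
  have hshift : k * π / n = r * π / n + (k / n : ℤ) * π := by
    have hk_eq : (k : ℝ) = r + n * (k / n : ℤ) := by
      exact_mod_cast (Int.emod_add_mul_ediv k n).symm
    rw [hk_eq]
    field_simp
  rw [hshift, cos_add_int_mul_pi, abs_mul, abs_neg_one_zpow, one_mul]
  have hn' : (0 : ℝ) < n := by exact_mod_cast hn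
  have hr1 : (1 : ℝ) ≤ r := by exact_mod_cast hr_pos
  have hrn : (r : ℝ) + 1 ≤ n := by exact_mod_cast hr_lt
  refine abs_cos_le_cos_of_mem_Icc (by positivity) ⟨?_, ?_⟩
  · rw [mul_div_assoc]
    exact le_mul_of_one_le_left (by positivity) hr1
  · rw [div_le_iff₀ hn', sub_mul, div_mul_cancel₀ _ hn'.ne']
    nlinarith [pi_pos]

theorem cos_pi_div_pos {n : ℕ} (hn : 2 < n) : 0 < cos (π / n) := by
  have hn' : (2 : ℝ) < n := by exact_mod_cast hn
  refine cos_pos_of_mem_Ioo ⟨by linarith [pi_pos, div_pos pi_pos (by linarith : (0 : ℝ) < n)], ?_⟩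
  exact div_lt_div_of_pos_left pi_pos two_pos hn'

end Real

theorem rn_sq {n : ℕ} (hn : 2 < n) : rn n ^ 2 = 1 / cos (π / n) :=
  sq_sqrt (one_div_nonneg.2 (cos_pi_div_pos hn).le)

theorem ip_eEv_ωst (n : ℕ) (i j : ℤ) :
    ip (eEv n j) (ωst n i) = (1 + rn n ^ 2 * cos ((2 * i - 2 * j + 1) * π / n)) / 2 := by
  have hangle : (2 * (i : ℝ) - 2 * j + 1) * π / n = 2 * π * i / n - (2 * j - 1) * π / n := by ring
  simp only [ip, eEv, ωst, Matrix.cons_val_zero, Matrix.cons_val_one, Matrix.cons_val_two,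
    Matrix.head_cons, Matrix.tail_cons, hangle, cos_sub]
  ring

theorem ngon_effect_state_pairing (n : ℕ) (hn : Even n) (h4 : 4 ≤ n) (i j : ℤ) :
    ip (eEv n j) (ωst n i)
      = (1 + (1 / Real.cos (π / n)) * Real.cos ((2 * (i : ℝ) - 2 * (j : ℝ) + 1) * π / n)) / 2 ∧
    0 ≤ ip (eEv n j) (ωst n i) ∧ ip (eEv n j) (ωst n i) ≤ 1 := by
  have hc : 0 < cos (π / n) := cos_pi_div_pos (by omega)
  have hpair := ip_eEv_ωst n i j
  rw [rn_sq (by omega)] at hpair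
  have hnot_dvd : ¬(n : ℤ) ∣ 2 * i - 2 * j + 1 := fun hdvd =>
    Int.not_even_iff_odd.2 ⟨i - j, by ring⟩
      (even_iff_two_dvd.2 (((Int.even_coe_nat n).2 hn).two_dvd.trans hdvd))
  have hcos := abs_cos_int_mul_pi_div_le hnot_dvd
  push_cast at hcos
  have hscaled : |1 / cos (π / n) * cos ((2 * i - 2 * j + 1) * π / n)| ≤ 1 := by
    rw [abs_mul, abs_of_pos (one_div_pos.2 hc), one_div_mul_eq_div]
    exact div_le_one_of_le₀ hcos hc.le
  refine ⟨hpair, ?_, ?_⟩ <;> linarith [abs_le.1 hscaled]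
end

section
/- For odd n ≥ 3 there is no two-outcome measurement consisting of two extremal effects: there exist no indices j, k and no positive scalars λ, μ with λ e_j + μ e_k = u. -/
open Real

/-! Only the horizontal components of `λ e_j + μ e_k = u` matter: they say that a positive
combination of the unit vectors at angles `2πj/n` and `2πk/n` vanishes, so these are
antipodal, i.e. `2(j - k)/n` is an odd integer, which is impossible for odd `n`. -/

lemma cos_sub_eq_neg_one_of_pos_combination_eq_zero {l μ A B : ℝ} (hl : 0 < l) (hμ : 0 < μ)
    (hcos : l * cos A + μ * cos B = 0) (hsin : l * sin A + μ * sin B = 0) :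
    cos (A - B) = -1 := by
  have hnorm : l ^ 2 + μ ^ 2 + 2 * l * μ * cos (A - B) = 0 := by
    rw [cos_sub]
    linear_combination (l * cos A + μ * cos B) * hcos + (l * sin A + μ * sin B) * hsin
      - l ^ 2 * sin_sq_add_cos_sq A - μ ^ 2 * sin_sq_add_cos_sq B
  nlinarith [neg_one_le_cos (A - B), sq_nonneg (l - μ), mul_pos hl hμ]

lemma cos_two_pi_mul_int_div_ne_neg_one {n : ℕ} (hn : Odd n) (m : ℤ) :
    cos (2 * π * m / n) ≠ -1 := by
  rw [Ne, cos_eq_neg_one_iff]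
  rintro ⟨k, hk⟩
  have hn0 : (n : ℝ) ≠ 0 := by exact_mod_cast hn.pos.ne'
  have hreal : ((2 * m : ℤ) : ℝ) = ((2 * k + 1) * n : ℤ) := by
    push_cast
    field_simp at hk
    nlinarith [pi_pos]
  have hint : 2 * m = (2 * k + 1) * n := by exact_mod_cast hreal
  have hodd : Odd ((2 * k + 1) * (n : ℤ)) := (odd_two_mul_add_one k).mul (hn.natCast)
  exact (Int.not_even_iff_odd.2 hodd) (hint ▸ even_two_mul m)

lemma rn_pos {n : ℕ} (hn : 2 < n) : 0 < rn n := by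
  have hn' : (2 : ℝ) < n := by exact_mod_cast hn
  have hcos : 0 < cos (π / n) := by
    apply cos_pos_of_mem_Ioo
    constructor
    · linarith [pi_pos, div_pos pi_pos (by linarith : (0 : ℝ) < n)]
    · rw [div_lt_div_iff₀ (by linarith) two_pos]
      nlinarith [pi_pos]
  exact sqrt_pos.2 (by positivity)

lemma eOd_apply_zero (n : ℕ) (j : ℤ) :
    eOd n j 0 = rn n / (1 + rn n ^ 2) * cos (2 * π * j / n) := by
  simp [eOd]
  ring

lemma eOd_apply_one (n : ℕ) (j : ℤ) :
    eOd n j 1 = rn n / (1 + rn n ^ 2) * sin (2 * π * j / n) := by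
  simp [eOd]
  ring

theorem ngon_odd_no_two_outcome_extremal_measurement (n : ℕ) (hn : Odd n) (h3 : 3 ≤ n) :
    ¬ ∃ (j k : ℤ) (l μ : ℝ), 0 < l ∧ 0 < μ ∧ l • eOd n j + μ • eOd n k = uE := by
  rintro ⟨j, k, l, μ, hl, hμ, heq⟩
  have hscale : rn n / (1 + rn n ^ 2) ≠ 0 := (div_pos (rn_pos h3) (by positivity)).ne'
  have hcos : l * cos (2 * π * j / n) + μ * cos (2 * π * k / n) = 0 := by
    have h0 := congrFun heq 0
    simp only [Pi.add_apply, Pi.smul_apply, smul_eq_mul, eOd_apply_zero, uE,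
      Matrix.cons_val] at h0
    refine (mul_eq_zero.1 ?_).resolve_left hscale
    linear_combination h0
  have hsin : l * sin (2 * π * j / n) + μ * sin (2 * π * k / n) = 0 := by
    have h1 := congrFun heq 1
    simp only [Pi.add_apply, Pi.smul_apply, smul_eq_mul, eOd_apply_one, uE,
      Matrix.cons_val] at h1
    refine (mul_eq_zero.1 ?_).resolve_left hscale
    linear_combination h1
  have hanti := cos_sub_eq_neg_one_of_pos_combination_eq_zero hl hμ hcos hsin
  refine cos_two_pi_mul_int_div_ne_neg_one hn (j - k) ?_
  convert hanti using 2
  push_cast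
  ring
end

section
/- For even n and distinct indices j₁, j₂, j₃ (mod n), the unique coefficients with λ₁ e_{j₁} + λ₂ e_{j₂} + λ₃ e_{j₃} = u are λ₁ = 1 − cot((j₁−j₂)π/n)·cot((j₃−j₁)π/n), λ₂ = 1 − cot((j₁−j₂)π/n)·cot((j₂−j₃)π/n), λ₃ = 1 − cot((j₂−j₃)π/n)·cot((j₃−j₁)π/n), whenever the relevant cotangents are defined. -/
open Real

/-
Writing θᵢ for the polar angle of the horizontal part of e_{jᵢ}, the three vector equations say
Σ lᵢ (cos θᵢ, sin θᵢ) = 0 and Σ lᵢ = 2. Eliminating two of the coefficients by cross products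
leaves l₁ (sin 2a + sin 2b + sin 2c) = 2 sin 2b for the half-differences a, b, c of the angles;
since a + b + c = 0 the bracket is -4 sin a sin b sin c, which gives
l₁ = -cos b / (sin a sin c) = 1 - cot a cot c. The other coefficients follow by cyclic symmetry.
-/

theorem Int.ne_one_and_ne_two_of_pairwise_not_modEq {n : ℕ} {a b c : ℤ}
    (hab : ¬ a ≡ b [ZMOD (n : ℤ)]) (hac : ¬ a ≡ c [ZMOD (n : ℤ)])
    (hbc : ¬ b ≡ c [ZMOD (n : ℤ)]) : n ≠ 1 ∧ n ≠ 2 := by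
  constructor <;> rintro rfl <;> simp only [Int.ModEq] at hab hac hbc <;> omega

theorem Real.cos_pi_div_natCast_pos {n : ℕ} (h1 : n ≠ 1) (h2 : n ≠ 2) : 0 < cos (π / n) := by
  rcases Nat.eq_zero_or_pos n with rfl | hpos
  · simp -- `π / 0 = 0`
  have h3 : (3 : ℝ) ≤ n := by exact_mod_cast (show 3 ≤ n by omega)
  apply cos_pos_of_mem_Ioo
  constructor
  · linarith [show 0 < π / n by positivity, pi_pos]
  · calc π / n ≤ π / 3 := by gcongr
      _ < π / 2 := by linarith [pi_pos]

theorem rn_pos_s9 {n : ℕ} (h : 0 < cos (π / n)) : 0 < rn n :=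
  Real.sqrt_pos.mpr (one_div_pos.mpr h)

theorem Real.sin_two_mul_add_sin_two_mul_add_sin_two_mul {a b c : ℝ} (h : a + b + c = 0) :
    sin (2 * a) + sin (2 * b) + sin (2 * c) = -4 * sin a * sin b * sin c := by
  obtain rfl : c = -(a + b) := by linarith
  simp only [sin_two_mul, mul_neg, sin_neg, sin_add, cos_add]
  linear_combination (-2 * sin a * cos a) * sin_sq_add_cos_sq b
    + (-2 * sin b * cos b) * sin_sq_add_cos_sq a

theorem Real.eq_one_sub_cot_mul_cot_of_sum_smul_circle {θ₁ θ₂ θ₃ l₁ l₂ l₃ : ℝ}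
    (hs12 : sin ((θ₁ - θ₂) / 2) ≠ 0) (hs23 : sin ((θ₂ - θ₃) / 2) ≠ 0)
    (hs31 : sin ((θ₃ - θ₁) / 2) ≠ 0)
    (hcos : l₁ * cos θ₁ + l₂ * cos θ₂ + l₃ * cos θ₃ = 0)
    (hsin : l₁ * sin θ₁ + l₂ * sin θ₂ + l₃ * sin θ₃ = 0)
    (hsum : l₁ + l₂ + l₃ = 2) :
    l₁ = 1 - cot ((θ₁ - θ₂) / 2) * cot ((θ₃ - θ₁) / 2) := by
  set a := (θ₁ - θ₂) / 2 with ha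
  set b := (θ₂ - θ₃) / 2 with hb
  set c := (θ₃ - θ₁) / 2 with hc
  have hsa : sin (2 * a) = sin θ₁ * cos θ₂ - cos θ₁ * sin θ₂ := by
    rw [← sin_sub, ha]; ring_nf
  have hsb : sin (2 * b) = sin θ₂ * cos θ₃ - cos θ₂ * sin θ₃ := by
    rw [← sin_sub, hb]; ring_nf
  have hsc : sin (2 * c) = sin θ₃ * cos θ₁ - cos θ₃ * sin θ₁ := by
    rw [← sin_sub, hc]; ring_nf
  have hcramer : l₁ * (sin (2 * a) + sin (2 * b) + sin (2 * c)) = 2 * sin (2 * b) := by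
    rw [hsa, hsb, hsc]
    linear_combination (sin θ₃ - sin θ₂) * hcos + (cos θ₂ - cos θ₃) * hsin
      + (sin θ₂ * cos θ₃ - cos θ₂ * sin θ₃) * hsum
  rw [sin_two_mul_add_sin_two_mul_add_sin_two_mul (by ring), sin_two_mul] at hcramer
  have hcos_b : cos b = cos a * cos c - sin a * sin c := by
    rw [← cos_add, ← cos_neg, ha, hb, hc]; ring_nf
  have hprod : l₁ * (sin a * sin c) = sin a * sin c - cos a * cos c := by
    apply mul_left_cancel₀ (mul_ne_zero (by norm_num : (-4 : ℝ) ≠ 0) hs23)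
    linear_combination hcramer + 4 * sin b * hcos_b
  rw [cot_eq_cos_div_sin, cot_eq_cos_div_sin]
  field_simp
  linear_combination hprod

theorem eEv_coeffs_of_sum_smul_eq_uE {n : ℕ} (hr : rn n ≠ 0) {j₁ j₂ j₃ : ℤ} {l₁ l₂ l₃ : ℝ}
    (hu : l₁ • eEv n j₁ + l₂ • eEv n j₂ + l₃ • eEv n j₃ = uE) :
    l₁ * cos ((2 * (j₁ : ℝ) - 1) * π / n) + l₂ * cos ((2 * (j₂ : ℝ) - 1) * π / n)
        + l₃ * cos ((2 * (j₃ : ℝ) - 1) * π / n) = 0 ∧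
      l₁ * sin ((2 * (j₁ : ℝ) - 1) * π / n) + l₂ * sin ((2 * (j₂ : ℝ) - 1) * π / n)
        + l₃ * sin ((2 * (j₃ : ℝ) - 1) * π / n) = 0 ∧
      l₁ + l₂ + l₃ = 2 := by
  have hx := congrFun hu 0
  have hy := congrFun hu 1
  have hz := congrFun hu 2
  simp only [eEv, uE, Pi.add_apply, Pi.smul_apply, smul_eq_mul, Matrix.cons_val_zero,
    Matrix.cons_val_one, Matrix.cons_val_two, Matrix.head_cons, Matrix.tail_cons] at hx hy hz
  refine ⟨?_, ?_, by linarith⟩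
  · apply mul_left_cancel₀ hr
    linear_combination 2 * hx
  · apply mul_left_cancel₀ hr
    linear_combination 2 * hy

theorem ngon_even_three_effect_measurement_coeffs_general (n : ℕ)
    (j₁ j₂ j₃ : ℤ) (h12 : ¬ j₁ ≡ j₂ [ZMOD (n : ℤ)]) (h13 : ¬ j₁ ≡ j₃ [ZMOD (n : ℤ)])
    (h23 : ¬ j₂ ≡ j₃ [ZMOD (n : ℤ)])
    (hs12 : Real.sin (((j₁ : ℝ) - j₂) * π / n) ≠ 0)
    (hs23 : Real.sin (((j₂ : ℝ) - j₃) * π / n) ≠ 0)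
    (hs31 : Real.sin (((j₃ : ℝ) - j₁) * π / n) ≠ 0)
    (l₁ l₂ l₃ : ℝ)
    (hu : l₁ • eEv n j₁ + l₂ • eEv n j₂ + l₃ • eEv n j₃ = uE) :
    l₁ = 1 - Real.cot (((j₁ : ℝ) - j₂) * π / n) * Real.cot (((j₃ : ℝ) - j₁) * π / n) ∧
    l₂ = 1 - Real.cot (((j₁ : ℝ) - j₂) * π / n) * Real.cot (((j₂ : ℝ) - j₃) * π / n) ∧
    l₃ = 1 - Real.cot (((j₂ : ℝ) - j₃) * π / n) * Real.cot (((j₃ : ℝ) - j₁) * π / n) := by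
  obtain ⟨hn1, hn2⟩ := Int.ne_one_and_ne_two_of_pairwise_not_modEq h12 h13 h23
  obtain ⟨hcos, hsin, hsum⟩ :=
    eEv_coeffs_of_sum_smul_eq_uE (rn_pos_s9 (cos_pi_div_natCast_pos hn1 hn2)).ne' hu
  have hhalf (i j : ℤ) :
      ((2 * (i : ℝ) - 1) * π / n - (2 * (j : ℝ) - 1) * π / n) / 2 = ((i : ℝ) - j) * π / n := by
    ring
  simp only [← hhalf] at hs12 hs23 hs31 ⊢
  refine ⟨eq_one_sub_cot_mul_cot_of_sum_smul_circle hs12 hs23 hs31 hcos hsin hsum, ?_, ?_⟩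
  · rw [mul_comm]
    exact eq_one_sub_cot_mul_cot_of_sum_smul_circle (l₂ := l₃) (l₃ := l₁) hs23 hs31 hs12
      (by linear_combination hcos) (by linear_combination hsin) (by linear_combination hsum)
  · rw [mul_comm]
    exact eq_one_sub_cot_mul_cot_of_sum_smul_circle (l₂ := l₁) (l₃ := l₂) hs31 hs12 hs23
      (by linear_combination hcos) (by linear_combination hsin) (by linear_combination hsum)

theorem ngon_even_three_effect_measurement_coeffs (n : ℕ) (hn : Even n) (h0 : 0 < n)
    (j₁ j₂ j₃ : ℤ) (h12 : ¬ j₁ ≡ j₂ [ZMOD (n : ℤ)]) (h13 : ¬ j₁ ≡ j₃ [ZMOD (n : ℤ)])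
    (h23 : ¬ j₂ ≡ j₃ [ZMOD (n : ℤ)])
    (hs12 : Real.sin (((j₁ : ℝ) - j₂) * π / n) ≠ 0)
    (hs23 : Real.sin (((j₂ : ℝ) - j₃) * π / n) ≠ 0)
    (hs31 : Real.sin (((j₃ : ℝ) - j₁) * π / n) ≠ 0)
    (l₁ l₂ l₃ : ℝ)
    (hu : l₁ • eEv n j₁ + l₂ • eEv n j₂ + l₃ • eEv n j₃ = uE) :
    l₁ = 1 - Real.cot (((j₁ : ℝ) - j₂) * π / n) * Real.cot (((j₃ : ℝ) - j₁) * π / n) ∧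
    l₂ = 1 - Real.cot (((j₁ : ℝ) - j₂) * π / n) * Real.cot (((j₂ : ℝ) - j₃) * π / n) ∧
    l₃ = 1 - Real.cot (((j₂ : ℝ) - j₃) * π / n) * Real.cot (((j₃ : ℝ) - j₁) * π / n) :=
  ngon_even_three_effect_measurement_coeffs_general n j₁ j₂ j₃ h12 h13 h23 hs12 hs23 hs31 l₁ l₂ l₃
    hu
end

section
/- Every vertex of the polytope {(P(y|x))_{x∈X,y∈{1,2,3}}, (λ_y)_{y∈{1,2,3}} : P(y|x) ≥ 0, P(y|x) ≤ λ_y, Σ_y P(y|x) = 1 for each x, Σ_y λ_y = c} with c = 2 has at least one λ_y = 0. -/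
/-!
If no `λ_y` vanishes, we find a nonzero direction `(D, e)` along which the point can be moved both
ways inside the polytope, so it is not extreme. Take `e ≠ 0` with `∑ e = 0` vanishing where
`λ_z = 1` (there is at most one such `z`, since `∑ λ = 2` and no `λ_y` is `0`), and in each row `x`
let `D x` equal `e` where `P(y|x) = λ_y`, vanish where `P(y|x) = 0`, and compensate on a remaining
coordinate. If a row has no remaining coordinate, its tight set `T` and its complement both carry
`λ`-mass `1`; one of them is a singleton `{z}` with `λ_z = 1`, so `∑_T e = 0` and no compensation
is needed. This is where `c = 2` enters.
-/

open Filter Topology Finset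

/-- The channel polytope: conditional probabilities P(y|x) together with bounds λ_y. -/
def channelPolytope (X : Type) [Fintype X] (c : ℝ) :
    Set ((X → Fin 3 → ℝ) × (Fin 3 → ℝ)) :=
  {v | (∀ x y, 0 ≤ v.1 x y) ∧ (∀ x y, v.1 x y ≤ v.2 y) ∧
       (∀ x, ∑ y, v.1 x y = 1) ∧ (∑ y, v.2 y = c)}

theorem eq_zero_of_mem_extremePoints_of_eventually_add_smul_mem {E : Type*} [AddCommGroup E]
    [Module ℝ E] {A : Set E} {v w : E} (hv : v ∈ A.extremePoints ℝ)
    (hw : ∀ᶠ s in 𝓝 (0 : ℝ), v + s • w ∈ A) : w = 0 := by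
  have hw_neg : ∀ᶠ s in 𝓝 (0 : ℝ), v + (-s) • w ∈ A :=
    (continuous_neg.tendsto' (0 : ℝ) 0 neg_zero).eventually hw
  obtain ⟨s, ⟨hs_add, hs_sub⟩, hs_pos⟩ :=
    (((hw.and hw_neg).filter_mono nhdsWithin_le_nhds).and
      (eventually_mem_nhdsWithin (a := (0 : ℝ)) (s := Set.Ioi 0))).exists
  have hmid : v ∈ openSegment ℝ (v + s • w) (v + (-s) • w) :=
    ⟨1 / 2, 1 / 2, by norm_num, by norm_num, by norm_num, by module⟩
  have hsw : s • w = 0 := by simpa using hv.2 hs_add hs_sub hmid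
  exact (smul_eq_zero.mp hsw).resolve_left hs_pos.ne'

theorem eventually_nonneg_add_mul {a d : ℝ} (ha : 0 ≤ a) (hd : a = 0 → d = 0) :
    ∀ᶠ s in 𝓝 (0 : ℝ), 0 ≤ a + s * d := by
  rcases ha.eq_or_lt with rfl | ha
  · simp [hd rfl]
  · have h_tendsto : Tendsto (fun s : ℝ => a + s * d) (𝓝 0) (𝓝 a) :=
      (by fun_prop : Continuous fun s : ℝ => a + s * d).tendsto' 0 a (by simp)
    exact (h_tendsto.eventually (lt_mem_nhds ha)).mono fun _ h => h.le

theorem eventually_add_smul_mem_channelPolytope {X : Type} [Fintype X] {c : ℝ}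
    {v w : (X → Fin 3 → ℝ) × (Fin 3 → ℝ)} (hv : v ∈ channelPolytope X c)
    (hw_row : ∀ x, ∑ y, w.1 x y = 0) (hw_sum : ∑ y, w.2 y = 0)
    (hw_zero : ∀ x y, v.1 x y = 0 → w.1 x y = 0)
    (hw_tight : ∀ x y, v.1 x y = v.2 y → w.1 x y = w.2 y) :
    ∀ᶠ s in 𝓝 (0 : ℝ), v + s • w ∈ channelPolytope X c := by
  obtain ⟨h_nonneg, h_le, h_row, h_sum⟩ := hv
  have h_lower : ∀ᶠ s in 𝓝 (0 : ℝ), ∀ x y, 0 ≤ v.1 x y + s * w.1 x y := by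
    simp only [eventually_all]
    exact fun x y => eventually_nonneg_add_mul (h_nonneg x y) (hw_zero x y)
  have h_upper : ∀ᶠ s in 𝓝 (0 : ℝ), ∀ x y,
      0 ≤ (v.2 y - v.1 x y) + s * (w.2 y - w.1 x y) := by
    simp only [eventually_all]
    exact fun x y => eventually_nonneg_add_mul (sub_nonneg.mpr (h_le x y))
      fun h => by rw [hw_tight x y (sub_eq_zero.mp h).symm, sub_self]
  filter_upwards [h_lower, h_upper] with s hs_lower hs_upper
  refine ⟨hs_lower, fun x y => ?_, fun x => ?_, ?_⟩
  · show v.1 x y + s * w.1 x y ≤ v.2 y + s * w.2 y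
    linarith [hs_upper x y]
  · simp [sum_add_distrib, ← mul_sum, h_row, hw_row]
  · simp [sum_add_distrib, ← mul_sum, h_sum, hw_sum]

theorem exists_row_direction_of_free_or_sum_tight_eq_zero {ι : Type*} [Fintype ι]
    [DecidableEq ι] {p L e : ι → ℝ} (hL : ∀ y, L y ≠ 0)
    (h : (∃ f, p f ≠ 0 ∧ p f ≠ L f) ∨ ∑ y with p y = L y, e y = 0) :
    ∃ d : ι → ℝ, ∑ y, d y = 0 ∧ (∀ y, p y = 0 → d y = 0) ∧ ∀ y, p y = L y → d y = e y := by
  set d₀ : ι → ℝ := fun y => if p y = L y then e y else 0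
  have hd₀_sum : ∑ y, d₀ y = ∑ y with p y = L y, e y := (sum_filter _ _).symm
  have hd₀_zero : ∀ y, p y = 0 → d₀ y = 0 := fun y hy => by
    simp [d₀, hy, (hL y).symm]
  have hd₀_tight : ∀ y, p y = L y → d₀ y = e y := fun y hy => if_pos hy
  rcases h with ⟨f, hf_zero, hf_tight⟩ | h
  · refine ⟨d₀ - Pi.single f (∑ y, d₀ y), by simp [sum_sub_distrib], fun y hy => ?_,
      fun y hy => ?_⟩
    · rw [Pi.sub_apply, hd₀_zero y hy, Pi.single_eq_of_ne (by rintro rfl; exact hf_zero hy),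
        sub_zero]
    · rw [Pi.sub_apply, hd₀_tight y hy, Pi.single_eq_of_ne (by rintro rfl; exact hf_tight hy),
        sub_zero]
  · exact ⟨d₀, hd₀_sum.trans h, hd₀_zero, hd₀_tight⟩

theorem sum_eq_zero_of_sum_eq_one {L e : Fin 3 → ℝ} (hL : ∑ y, L y = 2) (he : ∑ y, e y = 0)
    (he_one : ∀ z, L z = 1 → e z = 0) {T : Finset (Fin 3)} (hT : ∑ y ∈ T, L y = 1) :
    ∑ y ∈ T, e y = 0 := by
  have h_singleton : ∀ U : Finset (Fin 3), ∑ y ∈ U, L y = 1 → #U = 1 → ∑ y ∈ U, e y = 0 := by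
    intro U hU hU_card
    obtain ⟨z, rfl⟩ := card_eq_one.mp hU_card
    simp only [sum_singleton] at hU ⊢
    exact he_one z hU
  have hTc : ∑ y ∈ Tᶜ, L y = 1 := by linarith [sum_add_sum_compl T L]
  have hT_pos : 0 < #T := card_pos.mpr (nonempty_of_sum_ne_zero (by rw [hT]; exact one_ne_zero))
  have hTc_pos : 0 < #Tᶜ :=
    card_pos.mpr (nonempty_of_sum_ne_zero (by rw [hTc]; exact one_ne_zero))
  have h_card : #T + #Tᶜ = 3 := by rw [card_add_card_compl, Fintype.card_fin]
  rcases (by omega : #T = 1 ∨ #Tᶜ = 1) with h | h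
  · exact h_singleton T hT h
  · linarith [sum_add_sum_compl T e, h_singleton Tᶜ hTc h]

theorem exists_row_direction {p L e : Fin 3 → ℝ} (hp : ∑ y, p y = 1) (hL : ∑ y, L y = 2)
    (hL0 : ∀ y, L y ≠ 0) (he : ∑ y, e y = 0) (he_one : ∀ z, L z = 1 → e z = 0) :
    ∃ d : Fin 3 → ℝ, ∑ y, d y = 0 ∧ (∀ y, p y = 0 → d y = 0) ∧ ∀ y, p y = L y → d y = e y := by
  refine exists_row_direction_of_free_or_sum_tight_eq_zero hL0
    (or_iff_not_imp_left.mpr fun h_no_free => ?_)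
  push Not at h_no_free
  refine sum_eq_zero_of_sum_eq_one hL he he_one ?_
  calc ∑ y with p y = L y, L y = ∑ y with p y = L y, p y :=
        sum_congr rfl fun y hy => (mem_filter.mp hy).2.symm
    _ = ∑ y, p y := sum_filter_of_ne fun y _ => h_no_free y
    _ = 1 := hp

theorem exists_lambda_direction {L : Fin 3 → ℝ} (hL : ∑ y, L y = 2) (hL0 : ∀ y, L y ≠ 0) :
    ∃ e : Fin 3 → ℝ, e ≠ 0 ∧ ∑ y, e y = 0 ∧ ∀ z, L z = 1 → e z = 0 := by
  rw [Fin.sum_univ_three] at hL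
  by_cases h0 : L 0 = 1
  · refine ⟨![0, 1, -1], fun h => by simpa using congrFun h 1, by simp [Fin.sum_univ_three], ?_⟩
    intro z hz; fin_cases z <;> simp at hz ⊢ <;> grind
  by_cases h1 : L 1 = 1
  · refine ⟨![1, 0, -1], fun h => by simpa using congrFun h 0, by simp [Fin.sum_univ_three], ?_⟩
    intro z hz; fin_cases z <;> simp at hz ⊢ <;> grind
  · refine ⟨![1, -1, 0], fun h => by simpa using congrFun h 0, by simp [Fin.sum_univ_three], ?_⟩
    intro z hz; fin_cases z <;> simp at hz ⊢ <;> grind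

theorem vertex_even_case_has_zero_lambda (X : Type) [Fintype X]
    (v : (X → Fin 3 → ℝ) × (Fin 3 → ℝ))
    (hv : v ∈ Set.extremePoints ℝ (channelPolytope X 2)) :
    ∃ y, v.2 y = 0 := by
  by_contra! hL
  obtain ⟨-, -, h_row, h_sum⟩ := hv.1
  obtain ⟨e, he_ne, he_sum, he_one⟩ := exists_lambda_direction h_sum hL
  choose D hD_row hD_zero hD_tight using
    fun x => exists_row_direction (h_row x) h_sum hL he_sum he_one
  have h_move : ∀ᶠ s in 𝓝 (0 : ℝ), v + s • (D, e) ∈ channelPolytope X 2 :=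
    eventually_add_smul_mem_channelPolytope hv.1 hD_row he_sum hD_zero hD_tight
  exact he_ne <| congrArg Prod.snd <|
    eq_zero_of_mem_extremePoints_of_eventually_add_smul_mem hv h_move
end

section
/- For even n ≥ 4, the protocol where Alice sends ω₀ on input 0 and ω_{n/2} on input 1 (each with probability 1/2), and Bob measures {e₀, e_{n/2}}, yields conditional probabilities P(y=0|x=0) = 1 and P(y=1|x=1) = 1, hence mutual information I(X;Y) = 1 bit. -/
open Real

/-- Mutual information (in bits) between input X with distribution p and the output
of channel P. -/
noncomputable def mutualInfo {X Y : Type} [Fintype X] [Fintype Y]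
    (p : X → ℝ) (P : X → Y → ℝ) : ℝ :=
  ∑ x, ∑ y, p x * P x y * Real.logb 2 (P x y / ∑ x', p x' * P x' y)

/-- The channel induced by encoding 0 ↦ ω₀, 1 ↦ ω_{n/2} and measuring {e₀, e_{n/2}}. -/
noncomputable def evenChannel (n : ℕ) (x y : Fin 2) : ℝ :=
  ip (eEv n (if y = 0 then 0 else (n : ℤ) / 2))
     (ωst n (if x = 0 then 0 else (n : ℤ) / 2))


private lemma ngon_cospos (n : ℕ) (h4 : 4 ≤ n) : 0 < Real.cos (π / n) := by
  have hn0 : (0:ℝ) < n := by positivity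
  have hpi := Real.pi_pos
  apply Real.cos_pos_of_mem_Ioo
  constructor
  · have : 0 < π / n := by positivity
    linarith
  · have h4' : (4:ℝ) ≤ n := by exact_mod_cast h4
    have h1 : π / n ≤ π / 4 := by
      apply div_le_div_of_nonneg_left hpi.le <;> linarith
    nlinarith

private lemma ngon_rncos (n : ℕ) (h4 : 4 ≤ n) : rn n ^ 2 * Real.cos (π / n) = 1 := by
  have hcos := ngon_cospos n h4
  rw [rn, Real.sq_sqrt (by positivity)]
  field_simp

theorem ngon_even_capacity_one_bit_achieved (n : ℕ) (hn : Even n) (h4 : 4 ≤ n) :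
    evenChannel n 0 0 = 1 ∧ evenChannel n 1 1 = 1 ∧
    mutualInfo (fun _ : Fin 2 => (1 / 2 : ℝ)) (evenChannel n) = 1 := by
  obtain ⟨m, hm⟩ := hn
  have hn2 : n = 2*m := by omega
  subst hn2
  have h := ngon_rncos (2*m) h4
  have hmpos : (0:ℝ) < m := by
    have : 2 ≤ m := by omega
    exact_mod_cast by omega
  have hdiv : ((2*m : ℕ):ℤ)/2 = (m:ℤ) := by omega
  have e1 : 2 * π * (m:ℝ) / (2*m) = π := by field_simp
  have e2 : (2 * (m:ℝ) - 1) * π / (2*m) = π - π/(2*m) := by field_simp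
  have e3 : -π / (2*(m:ℝ)) = -(π/(2*m)) := by ring
  have h00 : evenChannel (2*m) 0 0 = 1 := by
    simp only [evenChannel, ip, eEv, ωst]
    norm_num
    push_cast at h ⊢
    rw [e3, Real.cos_neg]
    nlinarith [h]
  have h11 : evenChannel (2*m) 1 1 = 1 := by
    simp only [evenChannel, ip, eEv, ωst, hdiv]
    norm_num
    push_cast at h ⊢
    rw [e1, e2, Real.cos_pi, Real.sin_pi, Real.cos_pi_sub, Real.sin_pi_sub]
    nlinarith [h]
  have h01 : evenChannel (2*m) 0 1 = 0 := by
    simp only [evenChannel, ip, eEv, ωst, hdiv]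
    norm_num
    push_cast at h ⊢
    rw [e2, Real.cos_pi_sub]
    nlinarith [h]
  have h10 : evenChannel (2*m) 1 0 = 0 := by
    simp only [evenChannel, ip, eEv, ωst, hdiv]
    norm_num
    push_cast at h ⊢
    rw [e1, e3, Real.cos_pi, Real.sin_pi, Real.cos_neg]
    nlinarith [h]
  refine ⟨h00, h11, ?_⟩
  simp only [mutualInfo, Fin.sum_univ_two, h00, h01, h10, h11]
  norm_num
end
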